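/- Let f : ℕ → ℝ be a bounded completely multiplicative function, and suppose that the limit L = lim_{N→∞} 𝔼_{1≤m,n≤N} f(m²+n²) exists. Then the limit lim_{N→∞} 𝔼_{1≤m,n≤N, gcd(m,n)=1} f(m²+n²) exists and equals (π²/6) · ∏_p (1 − f(p)²/p²) · L. -/

import Mathlib

open Filter Finset Real ArithmeticFunction
open scoped ArithmeticFunction.Moebius Topology

/-!
Möbius inversion over `d = gcd(m, n)`, together with `f (d² x) = f(d)² f(x)`, writes the sum of
`f (m² + n²)` over coprime pairs in `[1, N]²` as `∑_{d ≤ N} μ d f(d)² S(⌊N/d⌋)`, where `S M` is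
the sum over the full box `[1, M]²`. As `S M / M² → L` and `|S M| ≤ M²`, dominated convergence
gives `N² L ∑_d μ(d) f(d)² / d²` asymptotically, and this series is the Euler product
`∏_p (1 - f(p)²/p²)`. For `f = 1` the same argument counts the coprime pairs: `≈ N² · 6/π²`.
-/

lemma abs_le_one_of_abs_le_of_map_mul {M : Type*} [Monoid M] {f : M → ℝ} {C : ℝ}
    (hfb : ∀ x, |f x| ≤ C) (hf1 : f 1 = 1) (hfmul : ∀ x y, f (x * y) = f x * f y) (x : M) :
    |f x| ≤ 1 := by
  have hpow (k : ℕ) : f (x ^ k) = f x ^ k := by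
    induction k with
    | zero => simpa using hf1
    | succ k ih => rw [pow_succ, pow_succ, hfmul, ih]
  by_contra! h
  obtain ⟨k, hk⟩ := pow_unbounded_of_one_lt C h
  have := hfb (x ^ k)
  rw [hpow, abs_pow] at this
  linarith

lemma sum_divisors_moebius {R : Type*} [Ring R] (n : ℕ) :
    ∑ d ∈ n.divisors, (μ d : R) = if n = 1 then 1 else 0 := by
  have h := congrArg (· n) (coe_moebius_mul_coe_zeta (R := R))
  simp only [coe_mul_zeta_apply, one_apply] at h
  exact h

lemma sum_Icc_filter_dvd {M : Type*} [AddCommMonoid M] (g : ℕ → M) {d : ℕ} (hd : 0 < d)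
    (N : ℕ) : ∑ a ∈ Icc 1 N with d ∣ a, g a = ∑ m ∈ Icc 1 (N / d), g (d * m) := by
  symm
  refine sum_nbij' (d * ·) (· / d) ?_ ?_ ?_ ?_ (fun _ _ => rfl)
  · intro m hm
    simp only [mem_filter, mem_Icc] at hm ⊢
    refine ⟨⟨Nat.mul_pos hd hm.1, ?_⟩, dvd_mul_right d m⟩
    rw [mul_comm]
    exact (Nat.le_div_iff_mul_le hd).mp hm.2
  · intro a ha
    simp only [mem_filter, mem_Icc] at ha ⊢
    exact ⟨(Nat.one_le_div_iff hd).mpr (Nat.le_of_dvd ha.1.1 ha.2), Nat.div_le_div_right ha.1.2⟩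
  · intro m _
    simp [Nat.mul_div_cancel_left _ hd]
  · intro a ha
    rw [mem_filter] at ha
    exact Nat.mul_div_cancel' ha.2

lemma sum_box_filter_dvd {M : Type*} [AddCommMonoid M] (F : ℕ × ℕ → M) {d : ℕ} (hd : 0 < d)
    (N : ℕ) :
    ∑ p ∈ Icc 1 N ×ˢ Icc 1 N with d ∣ p.1 ∧ d ∣ p.2, F p =
      ∑ m ∈ Icc 1 (N / d), ∑ n ∈ Icc 1 (N / d), F (d * m, d * n) := by
  rw [filter_product, sum_product, sum_Icc_filter_dvd _ hd]
  exact sum_congr rfl fun m _ => sum_Icc_filter_dvd (fun b => F (d * m, b)) hd N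

lemma divisors_gcd_eq_filter_Icc {a b N : ℕ} (ha : 1 ≤ a) (haN : a ≤ N) :
    (a.gcd b).divisors = {d ∈ Icc 1 N | d ∣ a ∧ d ∣ b} := by
  ext d
  have hg : a.gcd b ≠ 0 := Nat.gcd_ne_zero_left (by omega)
  simp only [Nat.mem_divisors, Nat.dvd_gcd_iff, mem_filter, mem_Icc]
  constructor
  · rintro ⟨hd, -⟩
    exact ⟨⟨Nat.pos_of_dvd_of_pos hd.1 ha, (Nat.le_of_dvd ha hd.1).trans haN⟩, hd⟩
  · rintro ⟨-, hd⟩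
    exact ⟨hd, hg⟩

theorem sum_box_coprime_eq_sum_moebius {R : Type*} [Ring R] (F : ℕ × ℕ → R) (N : ℕ) :
    ∑ p ∈ Icc 1 N ×ˢ Icc 1 N with p.1.gcd p.2 = 1, F p =
      ∑ d ∈ Icc 1 N, (μ d : R) * ∑ m ∈ Icc 1 (N / d), ∑ n ∈ Icc 1 (N / d), F (d * m, d * n) := by
  calc ∑ p ∈ Icc 1 N ×ˢ Icc 1 N with p.1.gcd p.2 = 1, F p
      = ∑ p ∈ Icc 1 N ×ˢ Icc 1 N, ∑ d ∈ Icc 1 N with d ∣ p.1 ∧ d ∣ p.2, (μ d : R) * F p := by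
        rw [sum_filter]
        refine sum_congr rfl fun p hp => ?_
        obtain ⟨⟨ha, haN⟩, -⟩ := mem_product.mp hp |>.imp mem_Icc.mp mem_Icc.mp
        rw [← sum_mul, ← divisors_gcd_eq_filter_Icc ha haN, sum_divisors_moebius]
        split_ifs <;> simp
    _ = ∑ d ∈ Icc 1 N, (μ d : R) * ∑ p ∈ Icc 1 N ×ˢ Icc 1 N with d ∣ p.1 ∧ d ∣ p.2, F p := by
        simp only [sum_filter, mul_sum]
        rw [sum_comm]
        refine sum_congr rfl fun d _ => sum_congr rfl fun p _ => ?_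
        split_ifs <;> simp
    _ = _ := sum_congr rfl fun d hd => by
        rw [sum_box_filter_dvd F (mem_Icc.mp hd).1]

lemma tendsto_natCast_div_div_self (k : ℕ) :
    Tendsto (fun N : ℕ => ((N / k : ℕ) : ℝ) / N) atTop (𝓝 (1 / k)) := by
  have h := (tendsto_nat_floor_mul_div_atTop (R := ℝ) (a := 1 / k) (by positivity)).comp
    tendsto_natCast_atTop_atTop
  refine h.congr fun N => ?_
  rw [Function.comp_apply, one_div_mul_eq_div, Nat.floor_div_eq_div]

theorem tendsto_sum_mul_div_div_sq {w S : ℕ → ℝ} {A B L : ℝ} (hw : ∀ d, |w d| ≤ A)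
    (hS : ∀ N, |S N| ≤ B * N ^ 2) (hSL : Tendsto (fun N : ℕ => S N / N ^ 2) atTop (𝓝 L)) :
    Tendsto (fun N : ℕ => (∑ d ∈ Icc 1 N, w d * S (N / d)) / N ^ 2) atTop
      (𝓝 (L * ∑' d : ℕ, w d / d ^ 2)) := by
  -- `S 0 = 0`, so the terms with `N / d = 0` vanish and the sum is a `tsum` over all `d`.
  have hS0 : S 0 = 0 := abs_nonpos_iff.mp (by simpa using hS 0)
  have hsum (N : ℕ) : (∑ d ∈ Icc 1 N, w d * S (N / d)) / N ^ 2 =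
      ∑' d : ℕ, w d * S (N / d) / N ^ 2 := by
    rw [sum_div, tsum_eq_sum fun d hd => ?_]
    have : N / d = 0 := by
      rcases Nat.eq_zero_or_pos d with rfl | hd0
      · exact Nat.div_zero N
      · exact Nat.div_eq_of_lt (by simp only [mem_Icc, not_and, not_le] at hd; omega)
    simp [this, hS0]
  simp_rw [hsum, ← tsum_mul_left, ← mul_div_assoc]
  refine tendsto_tsum_of_dominated_convergence (bound := fun d : ℕ => A * B * (1 / d ^ 2))
    ((summable_one_div_nat_pow.mpr one_lt_two).mul_left _) (fun d => ?_) ?_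
  · rcases Nat.eq_zero_or_pos d with rfl | hd
    · simp [hS0]
    have hev : (fun N : ℕ => w d * S (N / d) / N ^ 2) =ᶠ[atTop]
        fun N => w d * (S (N / d) / ((N / d : ℕ) : ℝ) ^ 2) * (((N / d : ℕ) : ℝ) / N) ^ 2 := by
      filter_upwards [eventually_ge_atTop d] with N hN
      have : ((N / d : ℕ) : ℝ) ≠ 0 := by
        exact_mod_cast (Nat.div_pos hN hd).ne'
      field_simp
    have hlim := ((hSL.comp (Nat.tendsto_div_const_atTop hd.ne')).const_mul (w d)).mul
      ((tendsto_natCast_div_div_self d).pow 2)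
    rw [show w d * L * (1 / (d : ℝ)) ^ 2 = L * w d / d ^ 2 by ring] at hlim
    exact hlim.congr' hev.symm
  · have hA : 0 ≤ A := (abs_nonneg _).trans (hw 0)
    have hB : 0 ≤ B := by simpa using (abs_nonneg _).trans (hS 1)
    refine Eventually.of_forall fun N d => ?_
    rcases eq_or_ne N 0 with rfl | hN
    · rw [Nat.cast_zero, zero_pow two_ne_zero, div_zero, norm_zero]
      positivity
    have hfloor : ((N / d : ℕ) : ℝ) ≤ N / d := Nat.cast_div_le
    calc ‖w d * S (N / d) / N ^ 2‖ = |w d| * |S (N / d)| / N ^ 2 := by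
          rw [Real.norm_eq_abs, abs_div, abs_mul, abs_of_nonneg (by positivity : (0 : ℝ) ≤ N ^ 2)]
      _ ≤ A * (B * ((N : ℝ) / d) ^ 2) / N ^ 2 := by
          gcongr
          · exact hw d
          · exact (hS _).trans (by gcongr)
      _ = A * B * (1 / d ^ 2) := by
          field_simp

theorem tsum_moebius_mul_div_pow_eq_tprod {g : ℕ → ℝ} (hg1 : g 1 = 1)
    (hgmul : ∀ {m n}, m.Coprime n → g (m * n) = g m * g n) (hgb : ∀ n, |g n| ≤ 1)
    {s : ℕ} (hs : 1 < s) :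
    ∑' n : ℕ, μ n * g n / n ^ s = ∏' p : Nat.Primes, (1 - g p / p ^ s) := by
  set F : ℕ → ℝ := fun n => μ n * g n / n ^ s
  have hFmul {m n : ℕ} (hmn : m.Coprime n) : F (m * n) = F m * F n := by
    simp only [F, hgmul hmn, isMultiplicative_moebius.map_mul_of_coprime hmn]
    push_cast
    ring
  have hFsum : Summable (‖F ·‖) := by
    refine (summable_one_div_nat_pow.mpr hs).of_nonneg_of_le (fun _ => norm_nonneg _) fun n => ?_
    have hμ : |(μ n : ℝ)| ≤ 1 := by exact_mod_cast abs_moebius_le_one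
    rw [Real.norm_eq_abs, abs_div, abs_mul, abs_pow, Nat.abs_cast]
    gcongr
    exact mul_le_one₀ hμ (abs_nonneg _) (hgb n)
  rw [← EulerProduct.eulerProduct_tprod (by simp [F, hg1]) hFmul hFsum (by simp [F])]
  refine tprod_congr fun p => ?_
  rw [tsum_eq_sum (s := {0, 1}) fun e he => ?_, sum_pair zero_ne_one]
  · simp [F, hg1, moebius_apply_prime p.prop, sub_eq_add_neg, neg_div]
  · obtain ⟨he0, he1⟩ := not_or.mp (by simpa using he)
    simp [F, moebius_apply_prime_pow p.prop he0, he1]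

open scoped LSeries.notation in
theorem tsum_moebius_div_sq : ∑' n : ℕ, (μ n : ℝ) / n ^ 2 = 6 / π ^ 2 := by
  have hζμ := LSeries_zeta_mul_Lseries_moebius (s := 2) (by norm_num)
  rw [LSeries_zeta_eq_riemannZeta (by norm_num), riemannZeta_two] at hζμ
  have hterm (n : ℕ) : LSeries.term (↗μ) 2 n = ((μ n / n ^ 2 : ℝ) : ℂ) := by
    rcases eq_or_ne n 0 with rfl | hn
    · simp
    · rw [LSeries.term_of_ne_zero hn, ← Nat.cast_ofNat, Complex.cpow_natCast]
      push_cast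
      rfl
  have hμ : LSeries (↗μ) 2 = ((∑' n : ℕ, (μ n : ℝ) / n ^ 2 : ℝ) : ℂ) := by
    rw [LSeries, Complex.ofReal_tsum]
    exact tsum_congr hterm
  rw [eq_inv_of_mul_eq_one_right hζμ, inv_div] at hμ
  exact_mod_cast hμ.symm

theorem tendsto_sum_coprime_div_sq {f : ℕ → ℝ} (hfmul : ∀ m n, f (m * n) = f m * f n)
    (hfb : ∀ n, |f n| ≤ 1) {L : ℝ}
    (hL : Tendsto (fun N : ℕ => (∑ m ∈ Icc 1 N, ∑ n ∈ Icc 1 N, f (m ^ 2 + n ^ 2)) / N ^ 2)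
      atTop (𝓝 L)) :
    Tendsto (fun N : ℕ =>
        (∑ p ∈ Icc 1 N ×ˢ Icc 1 N with p.1.gcd p.2 = 1, f (p.1 ^ 2 + p.2 ^ 2)) / N ^ 2)
      atTop (𝓝 (L * ∑' d : ℕ, μ d * f d ^ 2 / d ^ 2)) := by
  set S : ℕ → ℝ := fun N => ∑ m ∈ Icc 1 N, ∑ n ∈ Icc 1 N, f (m ^ 2 + n ^ 2)
  have hS (N : ℕ) : |S N| ≤ 1 * N ^ 2 := by
    calc |S N| ≤ ∑ m ∈ Icc 1 N, ∑ n ∈ Icc 1 N, |f (m ^ 2 + n ^ 2)| :=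
          (abs_sum_le_sum_abs _ _).trans (sum_le_sum fun _ _ => abs_sum_le_sum_abs _ _)
      _ ≤ ∑ m ∈ Icc 1 N, ∑ n ∈ Icc 1 N, 1 := by gcongr; exact hfb _
      _ = 1 * N ^ 2 := by simp [sq]
  have hw (d : ℕ) : |(μ d : ℝ) * f d ^ 2| ≤ 1 := by
    rw [abs_mul, abs_pow]
    exact mul_le_one₀ (by exact_mod_cast abs_moebius_le_one) (by positivity)
      (pow_le_one₀ (abs_nonneg _) (hfb d))
  have hdilate (d a b : ℕ) : f ((d * a) ^ 2 + (d * b) ^ 2) = f d ^ 2 * f (a ^ 2 + b ^ 2) := by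
    rw [show (d * a) ^ 2 + (d * b) ^ 2 = d * (d * (a ^ 2 + b ^ 2)) by ring, hfmul, hfmul]
    ring
  refine (tendsto_sum_mul_div_div_sq hw hS hL).congr fun N => ?_
  rw [sum_box_coprime_eq_sum_moebius (fun p => f (p.1 ^ 2 + p.2 ^ 2))]
  simp only [hdilate, ← mul_sum, mul_assoc, S]

theorem tendsto_card_coprime_div_sq :
    Tendsto (fun N : ℕ => (#{p ∈ Icc 1 N ×ˢ Icc 1 N | p.1.gcd p.2 = 1} : ℝ) / N ^ 2) atTop
      (𝓝 (6 / π ^ 2)) := by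
  have hbox : Tendsto (fun N : ℕ => (∑ m ∈ Icc 1 N, ∑ n ∈ Icc 1 N, (1 : ℝ)) / N ^ 2) atTop (𝓝 1) :=
    tendsto_const_nhds.congr' <| (eventually_ne_atTop 0).mono fun N hN => by simp [sq, hN]
  have h := tendsto_sum_coprime_div_sq (f := fun _ => 1) (by simp) (by simp) hbox
  simp only [one_pow, mul_one, one_mul, tsum_moebius_div_sq, sum_const, nsmul_one] at h
  exact h

theorem stmt5 (f : ℕ → ℝ) (C : ℝ) (hfb : ∀ n, |f n| ≤ C)
    (hf1 : f 1 = 1) (hfmul : ∀ m n, f (m * n) = f m * f n)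
    (L : ℝ)
    (hL : Tendsto (fun N : ℕ =>
        (∑ m ∈ Finset.Icc 1 N, ∑ n ∈ Finset.Icc 1 N, f (m ^ 2 + n ^ 2)) / (N : ℝ) ^ 2)
      atTop (nhds L)) :
    Tendsto (fun N : ℕ =>
        (∑ p ∈ (Finset.Icc 1 N ×ˢ Finset.Icc 1 N).filter (fun p => Nat.gcd p.1 p.2 = 1),
            f (p.1 ^ 2 + p.2 ^ 2)) /
          (((Finset.Icc 1 N ×ˢ Finset.Icc 1 N).filter
              (fun p => Nat.gcd p.1 p.2 = 1)).card : ℝ))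
      atTop
      (nhds ((Real.pi ^ 2 / 6) *
        (∏' p : {p : ℕ // p.Prime}, (1 - f p.1 ^ 2 / (p.1 : ℝ) ^ 2)) * L)) := by
  have hf : ∀ n, |f n| ≤ 1 := abs_le_one_of_abs_le_of_map_mul hfb hf1 hfmul
  have hf2 (n : ℕ) : |f n ^ 2| ≤ 1 := by
    rw [abs_pow]
    exact pow_le_one₀ (abs_nonneg _) (hf n)
  have hsum := tendsto_sum_coprime_div_sq hfmul hf hL
  rw [tsum_moebius_mul_div_pow_eq_tprod (g := (f · ^ 2)) (by simp [hf1])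
    (fun _ => by simp only [hfmul, mul_pow]) hf2 one_lt_two] at hsum
  convert (hsum.div tendsto_card_coprime_div_sq (by positivity)).congr' ?_ using 2
  · field_simp
    exact mul_comm _ _
  · filter_upwards [eventually_ne_atTop 0] with N hN
    rw [Pi.div_apply, div_div_div_cancel_right₀ (by positivity)]
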